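/- Fix integers n ≥ 1 and ℓ₀ with 1 ≤ ℓ₀ ≤ n, and let (p_t)_{t∈ℕ} be any sequence of reals with 1/11 ≤ p_t ≤ 10/11 for all t. For each t define step_t : ℕ → PMF ℕ by letting step_t(ℓ) be the pushforward of the binomial(ℓ, p_t) distribution under b ↦ if b ≥ 1 then b else ℓ. Let μ_0 be the point mass at ℓ₀ and μ_{t+1} = μ_t.bind(step_t). Then for every t ∈ ℕ, μ_t({1}) ≥ 1 − n·(111/121)^t. -/

import Mathlib

/-!
The potential `Φ ℓ = ℓ - 1` of the chain contracts by the factor `111/121` at every step.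
From `ℓ ≥ 1` leaders, the new state is the binomial count `B`, except that `B = 0` is reset
to `ℓ`, so `E[Φ ℓ'] + 1 = E[B] + ℓ P(B = 0) = ℓ p + ℓ (1 - p)^ℓ`. For `ℓ ≥ 2`,
`(1 - p)^ℓ ≤ (1 - p)^2` and `p (1 - p) ≥ 10/121` bound this by `1 + (111/121)(ℓ - 1)`,
with equality at `ℓ = 1`. Hence `E Φ(X_t) ≤ (111/121)^t (ℓ₀ - 1)`, and since the chain never
leaves `{ℓ ≥ 1}`, Markov's inequality gives `P(X_t ≠ 1) ≤ E Φ(X_t)`.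
-/

open scoped ENNReal NNReal
open Finset

theorem sum_range_pow_mul_pow_mul_choose_mul {R : Type*} [CommSemiring R] (x y : R) (n : ℕ) :
    ∑ k ∈ range (n + 1), x ^ k * y ^ (n - k) * n.choose k * k = n * x * (x + y) ^ (n - 1) := by
  cases n with
  | zero => simp
  | succ n =>
    rw [sum_range_succ', add_pow, mul_sum]
    simp only [Nat.cast_zero, mul_zero, add_zero, Nat.add_sub_cancel]
    refine sum_congr rfl fun k _ => ?_
    have hchoose : ((n + 1).choose (k + 1) * (k + 1) : R) = (n + 1) * n.choose k := by
      simpa using congrArg (Nat.cast : ℕ → R) (Nat.add_one_mul_choose_eq n k).symm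
    rw [Nat.add_sub_add_right]
    push_cast
    calc _ = x ^ (k + 1) * y ^ (n - k) * ((n + 1).choose (k + 1) * (k + 1) : R) := by ring
      _ = _ := by rw [hchoose]; ring

namespace PMF

variable {α β : Type*}

theorem tsum_bind_mul (q : PMF α) (f : α → PMF β) (g : β → ℝ≥0∞) :
    ∑' b, q.bind f b * g b = ∑' a, q a * ∑' b, f a b * g b := by
  simp_rw [bind_apply, ← ENNReal.tsum_mul_right, ← ENNReal.tsum_mul_left, mul_assoc]
  exact ENNReal.tsum_comm

theorem tsum_map_mul (q : PMF α) (f : α → β) (g : β → ℝ≥0∞) :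
    ∑' b, q.map f b * g b = ∑' a, q a * g (f a) := by
  rw [← bind_pure_comp, tsum_bind_mul]
  simp

theorem one_le_apply_add_tsum_mul (q : PMF α) (a₀ : α) (V : α → ℝ≥0∞)
    (hV : ∀ a ∈ q.support, a ≠ a₀ → 1 ≤ V a) : 1 ≤ q a₀ + ∑' a, q a * V a := by
  classical
  rw [← q.tsum_coe, ENNReal.tsum_eq_add_tsum_ite a₀]
  gcongr with a
  split_ifs with ha
  · exact zero_le
  · by_cases hq : q a = 0
    · simp [hq]
    · exact le_mul_of_one_le_right zero_le (hV a hq ha)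

theorem binomial_mean (p : ℝ≥0) (h : p ≤ 1) (n : ℕ) :
    ∑ i, binomial p h n i * (i : ℝ≥0∞) = n * p := by
  have := sum_range_pow_mul_pow_mul_choose_mul (p : ℝ≥0∞) (1 - p) n
  rw [add_tsub_cancel_of_le (by exact_mod_cast h), one_pow, mul_one] at this
  rw [← this, ← Fin.sum_univ_eq_sum_range]
  simp [binomial_apply]

end PMF

theorem ENNReal.one_sub_toReal_le_toReal {a b : ℝ≥0∞} (ha : a ≠ ∞) (hb : b ≠ ∞)
    (h : 1 ≤ a + b) : 1 - b.toReal ≤ a.toReal := by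
  have := ENNReal.toReal_mono (ENNReal.add_ne_top.2 ⟨ha, hb⟩) h
  rw [ENNReal.toReal_add ha hb, ENNReal.toReal_one] at this
  linarith

section TimeInhomogeneousChain

variable {α : Type*} {step : ℕ → α → PMF α} {μ : ℕ → PMF α}

theorem support_subset_of_step_support_subset (hμs : ∀ t, μ (t + 1) = (μ t).bind (step t))
    {S : Set α} (h0 : (μ 0).support ⊆ S) (hS : ∀ t, ∀ x ∈ S, (step t x).support ⊆ S) (t : ℕ) :
    (μ t).support ⊆ S := by
  induction t with
  | zero => exact h0
  | succ t ih =>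
    rw [hμs, PMF.support_bind]
    exact Set.iUnion₂_subset fun x hx => hS t x (ih hx)

theorem tsum_mul_le_pow_mul_of_drift (hμs : ∀ t, μ (t + 1) = (μ t).bind (step t))
    {S : Set α} (hsupp : ∀ t, (μ t).support ⊆ S) {V : α → ℝ≥0∞} {c : ℝ≥0∞}
    (hdrift : ∀ t, ∀ x ∈ S, ∑' a, step t x a * V a ≤ c * V x) (t : ℕ) :
    ∑' a, μ t a * V a ≤ c ^ t * ∑' a, μ 0 a * V a := by
  induction t with
  | zero => simp
  | succ t ih =>
    calc ∑' a, μ (t + 1) a * V a = ∑' x, μ t x * ∑' a, step t x a * V a := by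
          rw [hμs, PMF.tsum_bind_mul]
      _ ≤ ∑' x, μ t x * (c * V x) := by
          refine ENNReal.tsum_le_tsum fun x => ?_
          by_cases hx : μ t x = 0
          · simp [hx]
          · exact mul_le_mul_right (hdrift t x (hsupp t hx)) _
      _ = c * ∑' x, μ t x * V x := by
          rw [← ENNReal.tsum_mul_left]
          exact tsum_congr fun x => by ring
      _ ≤ c ^ (t + 1) * ∑' a, μ 0 a * V a := by
          rw [pow_succ', mul_assoc]
          gcongr

end TimeInhomogeneousChain

theorem mul_add_one_sub_pow_mul_le {p : ℝ} (h1 : 1 / 11 ≤ p) (h2 : p ≤ 10 / 11) (m : ℕ) :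
    (m + 1) * p + (1 - p) ^ (m + 1) * (m + 1) ≤ 111 / 121 * m + 1 := by
  rcases m.eq_zero_or_pos with rfl | hm
  · simp
  · have hpow : (1 - p) ^ (m + 1) ≤ (1 - p) ^ 2 :=
      pow_le_pow_of_le_one (by linarith) (by linarith) (by omega)
    have hm0 : (0 : ℝ) ≤ m := m.cast_nonneg
    calc (m + 1) * p + (1 - p) ^ (m + 1) * (m + 1) ≤ (m + 1) * (p + (1 - p) ^ 2) := by
          nlinarith
      _ ≤ (m + 1) * (111 / 121) := by gcongr; nlinarith
      _ ≤ 111 / 121 * m + 1 := by linarith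

noncomputable def leaderStep (p : ℝ≥0) (hp : p ≤ 1) (ℓ : ℕ) : PMF ℕ :=
  (PMF.binomial p hp ℓ).map fun b : Fin (ℓ + 1) => if 1 ≤ (b : ℕ) then (b : ℕ) else ℓ

theorem leaderStep_support_subset {p : ℝ≥0} (hp : p ≤ 1) {ℓ : ℕ} (hℓ : 1 ≤ ℓ) :
    (leaderStep p hp ℓ).support ⊆ Set.Ici 1 := by
  rw [leaderStep, PMF.support_map]
  rintro _ ⟨b, -, rfl⟩
  dsimp only [Set.mem_Ici]
  split_ifs <;> assumption

theorem tsum_leaderStep_mul_pred_le {p : ℝ≥0} (hp : p ≤ 1) (h1 : 1 / 11 ≤ p) (h2 : p ≤ 10 / 11)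
    {ℓ : ℕ} (hℓ : 1 ≤ ℓ) :
    ∑' a, leaderStep p hp ℓ a * ((a - 1 : ℕ) : ℝ≥0∞) ≤
      ((111 / 121 : ℝ≥0) : ℝ≥0∞) * ((ℓ - 1 : ℕ) : ℝ≥0∞) := by
  obtain ⟨m, rfl⟩ : ∃ m, ℓ = m + 1 := ⟨ℓ - 1, by omega⟩
  have hshift : ∀ b : Fin (m + 2),
      (((if 1 ≤ (b : ℕ) then (b : ℕ) else m + 1) - 1 : ℕ) : ℝ≥0∞) + 1 =
        b + if b = 0 then ((m + 1 : ℕ) : ℝ≥0∞) else 0 := by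
    intro b
    rcases eq_or_ne b 0 with rfl | hb
    · simp
    · have : 1 ≤ (b : ℕ) := Nat.one_le_iff_ne_zero.2 (Fin.val_ne_zero_iff.2 hb)
      rw [if_pos this, if_neg hb, add_zero]
      exact_mod_cast Nat.sub_add_cancel this
  have hexpect : ∑' a, leaderStep p hp (m + 1) a * ((a - 1 : ℕ) : ℝ≥0∞) + 1 =
      (m + 1) * p + (1 - p) ^ (m + 1) * (m + 1) := by
    conv_lhs => rw [leaderStep, PMF.tsum_map_mul, ← (PMF.binomial p hp (m + 1)).tsum_coe]
    rw [← ENNReal.tsum_add, tsum_fintype]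
    simp_rw [← mul_add_one, hshift, mul_add, sum_add_distrib, PMF.binomial_mean, mul_ite,
      mul_zero, sum_ite_eq', mem_univ, if_true, PMF.binomial_apply_zero]
    push_cast
    ring
  rw [← ENNReal.add_le_add_iff_right ENNReal.one_ne_top, hexpect, ← ENNReal.coe_one,
    ← ENNReal.coe_sub, Nat.add_sub_cancel]
  norm_cast
  rw [← NNReal.coe_le_coe]
  push_cast [NNReal.coe_sub hp]
  exact mul_add_one_sub_pow_mul_le h1 h2 m

theorem stmt4_general (n ℓ₀ : ℕ) (hℓ₀ : 1 ≤ ℓ₀) (hℓ₀n : ℓ₀ ≤ n)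
    (p : ℕ → ℝ) (hp_lo : ∀ t, 1 / 11 ≤ p t) (hp_hi : ∀ t, p t ≤ 10 / 11)
    (hp1 : ∀ t, ENNReal.ofReal (p t) ≤ 1)
    (step : ℕ → ℕ → PMF ℕ)
    (hstep : ∀ t ℓ, step t ℓ =
      (PMF.binomial (p t).toNNReal (ENNReal.coe_le_one_iff.mp (hp1 t)) ℓ).map
        (fun b : Fin (ℓ + 1) => if 1 ≤ (b : ℕ) then (b : ℕ) else ℓ))
    (μ : ℕ → PMF ℕ) (hμ0 : μ 0 = PMF.pure ℓ₀) (hμs : ∀ t, μ (t + 1) = (μ t).bind (step t)) :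
    ∀ t : ℕ, 1 - (n : ℝ) * (111 / 121) ^ t ≤ ((μ t) 1).toReal := by
  intro t
  have hsupp : ∀ t, (μ t).support ⊆ Set.Ici 1 :=
    support_subset_of_step_support_subset hμs (by simpa [hμ0] using hℓ₀) fun t x hx => by
      rw [hstep]; exact leaderStep_support_subset _ hx
  have hdrift := tsum_mul_le_pow_mul_of_drift hμs hsupp (V := fun a => ((a - 1 : ℕ) : ℝ≥0∞))
    (fun t x hx => by
      rw [hstep]
      refine tsum_leaderStep_mul_pred_le _ ?_ ?_ hx
      · exact (Real.le_toNNReal_iff_coe_le' (by norm_num)).2 (by simpa using hp_lo t)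
      · exact Real.toNNReal_le_iff_le_coe.2 (by simpa using hp_hi t)) t
  have hinit : ∑' a, μ 0 a * ((a - 1 : ℕ) : ℝ≥0∞) ≤ n := by
    rw [hμ0, tsum_eq_single ℓ₀ fun a ha => by simp [ha], PMF.pure_apply_self, one_mul]
    exact_mod_cast tsub_le_self.trans hℓ₀n
  have hmarkov := (μ t).one_le_apply_add_tsum_mul 1 (fun a => ((a - 1 : ℕ) : ℝ≥0∞))
    fun a ha ha1 => Nat.one_le_cast.2 (by have : 1 ≤ a := hsupp t ha; omega)
  have hbound : 1 ≤ μ t 1 + ((111 / 121 : ℝ≥0) : ℝ≥0∞) ^ t * n := by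
    grw [hmarkov, hdrift, hinit]
  simpa [mul_comm] using
    ENNReal.one_sub_toReal_le_toReal (PMF.apply_ne_top _ _) (by finiteness) hbound

/-- Time-inhomogeneous Markov chain model of the `LeaderElectionExact`
protocol. At time `t` the step from state `ℓ` is the law of `(if B ≥ 1 then B else ℓ)` where
`B` is binomial with `ℓ` trials and success probability `p_t ∈ [1/11, 10/11]`. Started from a
point mass at `ℓ₀` with `1 ≤ ℓ₀ ≤ n`, the chain law `μ_t` satisfies
`μ_t({1}) ≥ 1 - n·(111/121)^t` for every `t`. -/
theorem stmt4 (n ℓ₀ : ℕ) (hn : 1 ≤ n) (hℓ₀ : 1 ≤ ℓ₀) (hℓ₀n : ℓ₀ ≤ n)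
    (p : ℕ → ℝ) (hp_lo : ∀ t, 1 / 11 ≤ p t) (hp_hi : ∀ t, p t ≤ 10 / 11)
    (hp1 : ∀ t, ENNReal.ofReal (p t) ≤ 1)
    (step : ℕ → ℕ → PMF ℕ)
    (hstep : ∀ t ℓ, step t ℓ =
      (PMF.binomial (p t).toNNReal (ENNReal.coe_le_one_iff.mp (hp1 t)) ℓ).map
        (fun b : Fin (ℓ + 1) => if 1 ≤ (b : ℕ) then (b : ℕ) else ℓ))
    (μ : ℕ → PMF ℕ) (hμ0 : μ 0 = PMF.pure ℓ₀) (hμs : ∀ t, μ (t + 1) = (μ t).bind (step t)) :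
    ∀ t : ℕ, 1 - (n : ℝ) * (111 / 121) ^ t ≤ ((μ t) 1).toReal :=
  stmt4_general n ℓ₀ hℓ₀ hℓ₀n p hp_lo hp_hi hp1 step hstep μ hμ0 hμs
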